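/- The map σ : C(S², ℝ) × SL(2,ℂ) → C(S², ℝ) given by σ(α, Λ)(z) := K(Λ,z)⁻¹ · α(Λ·z), where Λ·z is the Möbius action on the sphere (via stereographic projection) and K the conformal factor, defines a right group action: σ(α, ΛΜ) = σ(σ(α,Λ), Μ) and σ(α, I) = α. -/

import Mathlib

open scoped Classical

abbrev SL2C := Matrix.SpecialLinearGroup (Fin 2) ℂ

/-- The Möbius action of `Λ ∈ SL(2,ℂ)` on the Riemann sphere `S² ≅ ℂ ∪ {∞}`
(the sphere being identified with `ℂ ∪ {∞}` via stereographic projection). -/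
noncomputable def moeb (Λ : SL2C) : OnePoint ℂ → OnePoint ℂ :=
  OnePoint.rec
    (if (Λ : Matrix (Fin 2) (Fin 2) ℂ) 1 0 = 0 then OnePoint.infty
      else (((Λ : Matrix (Fin 2) (Fin 2) ℂ) 0 0 / (Λ : Matrix (Fin 2) (Fin 2) ℂ) 1 0 : ℂ) :
        OnePoint ℂ))
    (fun ζ =>
      if (Λ : Matrix (Fin 2) (Fin 2) ℂ) 1 0 * ζ + (Λ : Matrix (Fin 2) (Fin 2) ℂ) 1 1 = 0 then
        OnePoint.infty
      else ((((Λ : Matrix (Fin 2) (Fin 2) ℂ) 0 0 * ζ + (Λ : Matrix (Fin 2) (Fin 2) ℂ) 0 1) /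
        ((Λ : Matrix (Fin 2) (Fin 2) ℂ) 1 0 * ζ + (Λ : Matrix (Fin 2) (Fin 2) ℂ) 1 1) : ℂ) :
        OnePoint ℂ))

/-- The conformal factor `K(Λ,·)` on the Riemann sphere: on `ℂ` it is
`K(Λ,ζ) = (1+|ζ|²)/(|aζ+b|² + |cζ+d|²)`, extended to `ζ = ∞` by `K(Λ,∞) = 1/(|a|²+|c|²)`. -/
noncomputable def Kext (Λ : SL2C) : OnePoint ℂ → ℝ :=
  OnePoint.rec
    (1 / (‖(Λ : Matrix (Fin 2) (Fin 2) ℂ) 0 0‖ ^ 2 +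
      ‖(Λ : Matrix (Fin 2) (Fin 2) ℂ) 1 0‖ ^ 2))
    (fun ζ =>
      (1 + ‖ζ‖ ^ 2) /
        (‖(Λ : Matrix (Fin 2) (Fin 2) ℂ) 0 0 * ζ +
            (Λ : Matrix (Fin 2) (Fin 2) ℂ) 0 1‖ ^ 2 +
          ‖(Λ : Matrix (Fin 2) (Fin 2) ℂ) 1 0 * ζ +
            (Λ : Matrix (Fin 2) (Fin 2) ℂ) 1 1‖ ^ 2))

/-- The BMS action on functions `α : S² → ℝ`: `σ(α,Λ) := K(Λ,·)⁻¹ · (α ∘ Λ)`. -/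
noncomputable def bmsAct (α : OnePoint ℂ → ℝ) (Λ : SL2C) : OnePoint ℂ → ℝ :=
  fun z => (Kext Λ z)⁻¹ * α (moeb Λ z)

/-!
In homogeneous coordinates `v ∈ ℂ² \ {0}` the Möbius map is induced by the linear map
`v ↦ Λ v`, and the conformal factor is `K(Λ, [v]) = |v|² / |Λ v|²`, a quotient that is
invariant under rescaling `v`. Hence `Λ ↦ moeb Λ` is the action of `SL(2,ℂ) ⊆ GL(2,ℂ)` on
`ℙ¹(ℂ)`, and `K` satisfies the cocycle identity `K(ΛM, z) = K(Λ, M z) K(M, z)` by telescoping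
`|v|² / |ΛMv|² = (|Mv|² / |ΛMv|²) (|v|² / |Mv|²)`. Both properties of `σ` follow at once.
-/

open Matrix OnePoint Projectivization

lemma moeb_eq_smul (Λ : SL2C) (z : OnePoint ℂ) :
    moeb Λ z = (Λ : GL (Fin 2) ℂ) • z := by
  induction z using OnePoint.rec with
  | infty => rw [smul_infty_eq_ite]; rfl
  | coe ζ => rw [smul_some_eq_ite]; rfl

lemma moeb_mul (Λ M : SL2C) (z : OnePoint ℂ) : moeb (Λ * M) z = moeb Λ (moeb M z) := by
  simp only [moeb_eq_smul, map_mul, mul_smul]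

lemma moeb_one (z : OnePoint ℂ) : moeb 1 z = z := by
  simp only [moeb_eq_smul, map_one, one_smul]

def homCoords (z : OnePoint ℂ) : Fin 2 → ℂ :=
  z.elim ![1, 0] fun ζ => ![ζ, 1]

lemma homCoords_ne_zero (z : OnePoint ℂ) : homCoords z ≠ 0 := by
  induction z using OnePoint.rec with
  | infty => simp [homCoords]
  | coe ζ => simp [homCoords]

lemma mk_homCoords (z : OnePoint ℂ) :
    mk ℂ (homCoords z) (homCoords_ne_zero z) = equivProjectivization ℂ z := by
  induction z using OnePoint.rec with
  | infty => rfl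
  | coe ζ => rfl

lemma mulVec_homCoords (Λ : SL2C) (z : OnePoint ℂ) :
    ∃ c : ℂ, c ≠ 0 ∧ (Λ : Matrix (Fin 2) (Fin 2) ℂ) *ᵥ homCoords z = c • homCoords (moeb Λ z) := by
  have h := congrArg (equivProjectivization ℂ) (moeb_eq_smul Λ z)
  rw [equivProjectivization_smul, ← mk_homCoords, ← mk_homCoords, smul_mk, mk_eq_mk_iff] at h
  obtain ⟨c, hc⟩ := h
  refine ⟨↑c⁻¹, c⁻¹.ne_zero, ?_⟩
  rw [← hc, ← Units.smul_def, inv_smul_smul]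
  rfl

noncomputable def normSqSum (v : Fin 2 → ℂ) : ℝ := ‖v 0‖ ^ 2 + ‖v 1‖ ^ 2

lemma normSqSum_smul (c : ℂ) (v : Fin 2 → ℂ) : normSqSum (c • v) = ‖c‖ ^ 2 * normSqSum v := by
  simp only [normSqSum, Pi.smul_apply, smul_eq_mul, norm_mul]
  ring

lemma normSqSum_ne_zero {v : Fin 2 → ℂ} (hv : v ≠ 0) : normSqSum v ≠ 0 := by
  contrapose! hv
  have h := (add_eq_zero_iff_of_nonneg (by positivity) (by positivity)).1 hv
  ext i
  fin_cases i <;> simp_all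

lemma Kext_eq_div (Λ : SL2C) (z : OnePoint ℂ) :
    Kext Λ z = normSqSum (homCoords z) /
      normSqSum ((Λ : Matrix (Fin 2) (Fin 2) ℂ) *ᵥ homCoords z) := by
  induction z using OnePoint.rec with
  | infty =>
    show 1 / _ = _
    simp [normSqSum, homCoords]
  | coe ζ =>
    show (1 + ‖ζ‖ ^ 2) / _ = _
    simp [normSqSum, homCoords, add_comm]

-- `M v` is a lift of `moeb M z`, and `|v|² / |Λ v|²` does not depend on the choice of lift.
lemma Kext_moeb (Λ M : SL2C) (z : OnePoint ℂ) :
    Kext Λ (moeb M z) = normSqSum ((M : Matrix (Fin 2) (Fin 2) ℂ) *ᵥ homCoords z) /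
      normSqSum ((Λ * M : Matrix (Fin 2) (Fin 2) ℂ) *ᵥ homCoords z) := by
  obtain ⟨c, hc, hMv⟩ := mulVec_homCoords M z
  have hc' : ‖c‖ ^ 2 ≠ 0 := by positivity
  rw [Kext_eq_div, ← mulVec_mulVec, hMv, mulVec_smul, normSqSum_smul, normSqSum_smul,
    mul_div_mul_left _ _ hc']

lemma Kext_mul (Λ M : SL2C) (z : OnePoint ℂ) :
    Kext (Λ * M) z = Kext Λ (moeb M z) * Kext M z := by
  obtain ⟨c, hc, hMv⟩ := mulVec_homCoords M z
  have hMv_ne : normSqSum ((M : Matrix (Fin 2) (Fin 2) ℂ) *ᵥ homCoords z) ≠ 0 := by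
    rw [hMv]
    exact normSqSum_ne_zero (smul_ne_zero hc (homCoords_ne_zero _))
  -- Through the abbreviation `SL2C`, `rw` cannot use `coe_mul` directly.
  have hcoe : ((Λ * M : SL2C) : Matrix (Fin 2) (Fin 2) ℂ) = Λ * M :=
    Matrix.SpecialLinearGroup.coe_mul Λ M
  rw [Kext_moeb, Kext_eq_div, Kext_eq_div, div_mul_div_comm, mul_comm (normSqSum _),
    mul_div_mul_right _ _ hMv_ne, hcoe]

lemma Kext_one (z : OnePoint ℂ) : Kext 1 z = 1 := by
  have hcoe : ((1 : SL2C) : Matrix (Fin 2) (Fin 2) ℂ) = 1 := Matrix.SpecialLinearGroup.coe_one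
  rw [Kext_eq_div, hcoe, one_mulVec, div_self (normSqSum_ne_zero (homCoords_ne_zero z))]

/-- The map `σ(α, Λ)(z) := K(Λ,z)⁻¹ · α(Λ·z)` defines a right group action of `SL(2,ℂ)` on
functions on the sphere: `σ(α, ΛΜ) = σ(σ(α,Λ), Μ)` and `σ(α, I) = α`. -/
theorem bmsAct_is_right_action :
    (∀ (α : OnePoint ℂ → ℝ) (Λ M : SL2C), bmsAct α (Λ * M) = bmsAct (bmsAct α Λ) M) ∧
    (∀ α : OnePoint ℂ → ℝ, bmsAct α (1 : SL2C) = α) := by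
  refine ⟨fun α Λ M => funext fun z => ?_, fun α => funext fun z => ?_⟩
  · simp only [bmsAct, Kext_mul, moeb_mul, mul_inv]
    ring
  · simp only [bmsAct, Kext_one, moeb_one, inv_one, one_mul]
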